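/- (Corollary 2(ii)) Suppose d₁ = d₂ = 0, suppose c₁,ₗ ≠ 0 and c₂,ₗ ≠ 0 for all l, and suppose the controllers u₁, u₂ are chosen as u₁,ₗ₍ₘ₎(t) = c₁,ₗ₍ₘ₎⁻¹ a₁,ᵢ₍ₘ₎ f₁,ᵢ₍ₘ₎(x₁(t)) + c₁,ₗ₍ₘ₎⁻¹ b₁,ⱼ₍ₘ₎ g₁,ⱼ₍ₘ₎(y₁(t)) − h₁,ₗ₍ₘ₎(z₁(t)) + c₁,ₗ₍ₘ₎⁻¹ e₁ₘ(t) and u₂,ₗ₍ₘ₎(t) = c₂,ₗ₍ₘ₎⁻¹ a₂,ᵢ₍ₘ₎ f₂,ᵢ₍ₘ₎(x₂(t)) + c₂,ₗ₍ₘ₎⁻¹ b₂,ⱼ₍ₘ₎ g₂,ⱼ₍ₘ₎(y₂(t)) − h₂,ₗ₍ₘ₎(z₂(t)) + c₂,ₗ₍ₘ₎⁻¹ e₂ₘ(t), where here e₁ₘ(t) = a₁,ᵢ₍ₘ₎ x₁,ᵢ₍ₘ₎(t) + b₁,ⱼ₍ₘ₎ y₁,ⱼ₍ₘ₎(t) −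 c₁,ₗ₍ₘ₎ z₁,ₗ₍ₘ₎(t), e₂ₘ(t) = a₂,ᵢ₍ₘ₎ x₂,ᵢ₍ₘ₎(t) + b₂,ⱼ₍ₘ₎ y₂,ⱼ₍ₘ₎(t) − c₂,ₗ₍ₘ₎ z₂,ₗ₍ₘ₎(t), and the switching map l : {1,…,n} → {1,…,n} is a bijection. Then for every m, e₁ₘ(t) → 0 and e₂ₘ(t) → 0 as t → ∞; that is, the four drive systems achieve dual combination multi-switching synchronization with the response systems z₁' = h₁(z₁) + u₁ and z₂' = h₂(z₂) + u₂. -/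

import Mathlib

open Filter Topology


lemma decay_aux (e : ℝ → ℝ) (h : ∀ t, HasDerivAt e (-(e t)) t) :
    Tendsto e atTop (𝓝 0) := by
  have key : ∀ t, e t * Real.exp t = e 0 := by
    have hc : ∀ t : ℝ, HasDerivAt (fun s => e s * Real.exp s) 0 t := by
      intro t
      have := (h t).fun_mul (Real.hasDerivAt_exp t)
      simpa [mul_comm] using this
    intro t
    have hconst : (fun s => e s * Real.exp s) t = (fun s => e s * Real.exp s) 0 :=
      is_const_of_deriv_eq_zero (fun s => (hc s).differentiableAt)
        (fun s => (hc s).deriv) t 0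
    simpa using hconst
  have hrep : e = fun t => e 0 * Real.exp (-t) := by
    funext t
    have := key t
    rw [Real.exp_neg, ← this, mul_inv_cancel_right₀ (Real.exp_ne_zero t)]
  rw [hrep]
  simpa using (Real.tendsto_exp_neg_atTop_nhds_zero.const_mul (e 0))

/-- Corollary 2(ii): if d₁ = d₂ = 0, c₁, c₂ have nonzero entries, the switching map l
is a bijection, and u₁, u₂ are chosen as prescribed, then the four drive systems
achieve dual combination multi-switching synchronization with z₁' = h₁(z₁) + u₁ and
z₂' = h₂(z₂) + u₂. -/
theorem dual_combination_multi_switching_sync_z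
    (n : ℕ) (hn : 1 ≤ n)
    (f₁ f₂ g₁ g₂ h₁ h₂ : (Fin n → ℝ) → (Fin n → ℝ))
    (x₁ x₂ y₁ y₂ z₁ z₂ u₁ u₂ : ℝ → Fin n → ℝ)
    (a₁ a₂ b₁ b₂ c₁ c₂ d₁ d₂ : Fin n → ℝ)
    (i j l : Fin n → Fin n)
    (hd₁ : d₁ = 0) (hd₂ : d₂ = 0)
    (hc₁ : ∀ m, c₁ m ≠ 0) (hc₂ : ∀ m, c₂ m ≠ 0)
    (hl : Function.Bijective l)
    (hx₁ : ∀ t m, HasDerivAt (fun s => x₁ s m) (f₁ (x₁ t) m) t)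
    (hx₂ : ∀ t m, HasDerivAt (fun s => x₂ s m) (f₂ (x₂ t) m) t)
    (hy₁ : ∀ t m, HasDerivAt (fun s => y₁ s m) (g₁ (y₁ t) m) t)
    (hy₂ : ∀ t m, HasDerivAt (fun s => y₂ s m) (g₂ (y₂ t) m) t)
    (hz₁ : ∀ t m, HasDerivAt (fun s => z₁ s m) (h₁ (z₁ t) m + u₁ t m) t)
    (hz₂ : ∀ t m, HasDerivAt (fun s => z₂ s m) (h₂ (z₂ t) m + u₂ t m) t)
    (e₁ e₂ : ℝ → Fin n → ℝ)
    (he₁ : ∀ t m, e₁ t m =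
      a₁ (i m) * x₁ t (i m) + b₁ (j m) * y₁ t (j m) - c₁ (l m) * z₁ t (l m))
    (he₂ : ∀ t m, e₂ t m =
      a₂ (i m) * x₂ t (i m) + b₂ (j m) * y₂ t (j m) - c₂ (l m) * z₂ t (l m))
    (hu₁ : ∀ t m, u₁ t (l m) =
      (c₁ (l m))⁻¹ * a₁ (i m) * f₁ (x₁ t) (i m)
        + (c₁ (l m))⁻¹ * b₁ (j m) * g₁ (y₁ t) (j m)
        - h₁ (z₁ t) (l m) + (c₁ (l m))⁻¹ * e₁ t m)
    (hu₂ : ∀ t m, u₂ t (l m) =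
      (c₂ (l m))⁻¹ * a₂ (i m) * f₂ (x₂ t) (i m)
        + (c₂ (l m))⁻¹ * b₂ (j m) * g₂ (y₂ t) (j m)
        - h₂ (z₂ t) (l m) + (c₂ (l m))⁻¹ * e₂ t m) :
    ∀ m : Fin n,
      Tendsto (fun t => e₁ t m) atTop (𝓝 0) ∧
      Tendsto (fun t => e₂ t m) atTop (𝓝 0) := by
  have main : ∀ m : Fin n, Tendsto (fun t => e₁ t m) atTop (𝓝 0) ∧
      Tendsto (fun t => e₂ t m) atTop (𝓝 0) := by
    intro m
    have h1 : ∀ t, HasDerivAt (fun s => e₁ s m) (-(e₁ t m)) t := by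
      intro t
      have hd : HasDerivAt (fun s => e₁ s m)
          (a₁ (i m) * f₁ (x₁ t) (i m) + b₁ (j m) * g₁ (y₁ t) (j m)
            - c₁ (l m) * (h₁ (z₁ t) (l m) + u₁ t (l m))) t := by
        have := (((hx₁ t (i m)).const_mul (a₁ (i m))).add
          ((hy₁ t (j m)).const_mul (b₁ (j m)))).sub
          ((hz₁ t (l m)).const_mul (c₁ (l m)))
        refine HasDerivAt.congr_of_eventuallyEq this ?_
        filter_upwards with s
        rw [he₁ s m]
        rfl
      have heq : a₁ (i m) * f₁ (x₁ t) (i m) + b₁ (j m) * g₁ (y₁ t) (j m)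
            - c₁ (l m) * (h₁ (z₁ t) (l m) + u₁ t (l m)) = -(e₁ t m) := by
        rw [hu₁ t m]
        field_simp [hc₁ (l m)]
        ring
      rwa [heq] at hd
    have h2 : ∀ t, HasDerivAt (fun s => e₂ s m) (-(e₂ t m)) t := by
      intro t
      have hd : HasDerivAt (fun s => e₂ s m)
          (a₂ (i m) * f₂ (x₂ t) (i m) + b₂ (j m) * g₂ (y₂ t) (j m)
            - c₂ (l m) * (h₂ (z₂ t) (l m) + u₂ t (l m))) t := by
        have := (((hx₂ t (i m)).const_mul (a₂ (i m))).add
          ((hy₂ t (j m)).const_mul (b₂ (j m)))).sub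
          ((hz₂ t (l m)).const_mul (c₂ (l m)))
        refine HasDerivAt.congr_of_eventuallyEq this ?_
        filter_upwards with s
        rw [he₂ s m]
        rfl
      have heq : a₂ (i m) * f₂ (x₂ t) (i m) + b₂ (j m) * g₂ (y₂ t) (j m)
            - c₂ (l m) * (h₂ (z₂ t) (l m) + u₂ t (l m)) = -(e₂ t m) := by
        rw [hu₂ t m]
        field_simp [hc₂ (l m)]
        ring
      rwa [heq] at hd
    exact ⟨decay_aux _ h1, decay_aux _ h2⟩
  exact main
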